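/- The map A : C⁺(G₊₁(v)) → C⁺(G) defined by A(φ)((K,t),S) = ∑_{i∈ℤ} U^{c(i,(K,t),S)}·φ((K,t+2i+1),S) is an 𝔽[U]-equivariant chain map, i.e. δ∘A = A∘δ and A commutes with multiplication by U. -/

import Mathlib

/-!
Common setup: the lattice cohomology complex of a weighted graph
(Némethi; J. Greene, "A surgery triangle for lattice cohomology").

A finite graph `G` with integer weights on vertices and signs on (multi-)edges is
encoded by its symmetric incidence data `M : V → V → ℤ`: for `u ≠ w` the entry
`M u w` is the signed number of edges joining `u` and `w`, and `M u u = m(u)` is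
the weight of `u`.  This is exactly the data of the intersection pairing `(·,·)`
on `L(G) = ℤ⟨E_u : u ∈ V⟩`, via `M u w = (E_u, E_w)`.
-/

noncomputable section

open Function

/-- A graph with integer vertex weights and signed multi-edges, encoded by the
symmetric pairing data `M u w = (E_u, E_w)` on `L(G)`. -/
structure WGraph (V : Type*) where
  M : V → V → ℤ
  symm : ∀ u w, M u w = M w u

variable {V : Type*} [Fintype V] [DecidableEq V]

/-- Evaluation of `K ∈ Hom(L(G), ℤ)` (recorded by its components `K u = K(E_u)`)
on a lattice vector `x = ∑ x_u E_u ∈ L(G)`. -/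
def evalK (K x : V → ℤ) : ℤ := ∑ u, K u * x u

/-- `E_T = ∑_{j ∈ T} E_j ∈ L(G)`. -/
def eVec (T : Finset V) : V → ℤ := fun u => if u ∈ T then 1 else 0

/-- Splitting a sum over `V` at a vertex `v`. -/
theorem sum_split (v : V) (f : V → ℤ) :
    ∑ u, f u = f v + ∑ u : {u : V // u ≠ v}, f u.1 := by
  rw [Fintype.sum_eq_add_sum_compl v f]
  congr 1
  exact Finset.sum_subtype _ (fun x => by simp) f

namespace WGraph

/-- The symmetric bilinear pairing `(x, y)` on `L(G)`. -/
def pair (G : WGraph V) (x y : V → ℤ) : ℤ := ∑ u, ∑ w, G.M u w * x u * y w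

/-- `K ∈ Hom(L(G),ℤ)` is characteristic: `(K,x) ≡ (x,x) (mod 2)` for all `x ∈ L(G)`. -/
def IsChar (G : WGraph V) (K : V → ℤ) : Prop :=
  ∀ x : V → ℤ, evalK K x ≡ G.pair x x [ZMOD 2]

/-- The set `Char(G)` of characteristic vectors, as a type. -/
def Ch (G : WGraph V) : Type _ := {K : V → ℤ // G.IsChar K}

/-- `K + 2x ∈ Hom(L(G),ℤ)`, for `K ∈ Hom(L(G),ℤ)` and `x ∈ L(G)` (a lattice vector
is viewed in `Hom(L(G),ℤ)` via the pairing). -/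
def chAdd (G : WGraph V) (K x : V → ℤ) : V → ℤ := fun u => K u + 2 * G.pair x (eVec {u})

/-- The difference `q(K + 2x) − q(K) = −((K,x) + (x,x))/2`, where `q(y) = −(y,y)/8`;
it is an integer whenever `K` is characteristic. -/
def qdiff (G : WGraph V) (K x : V → ℤ) : ℤ := (-(evalK K x + G.pair x x)) / 2

/-- The difference `q(K,S) − q(K) = max { q(K + 2E_T) − q(K) : T ⊆ S }`, where
`q(K,S) = max { q(K + 2 ∑_{j∈T} E_j) : T ⊆ S }`. -/
def qrel (G : WGraph V) (K : V → ℤ) (S : Finset V) : ℤ :=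
  S.powerset.sup' (Finset.powerset_nonempty S) fun T => G.qdiff K (eVec T)

/-- `G₊₁(v)`: increase the weight `m(v)` of the vertex `v` by one. -/
def bump (G : WGraph V) (v : V) : WGraph V where
  M u w := if u = v ∧ w = v then G.M u w + 1 else G.M u w
  symm u w := by
    have h := G.symm u w
    by_cases hu : u = v <;> by_cases hw : w = v <;> simp [hu, hw, h] <;>
      exact G.symm _ _

/-- `G − v`: delete the vertex `v` and all incident edges. -/
def delete (G : WGraph V) (v : V) : WGraph {u : V // u ≠ v} where
  M u w := G.M u.1 w.1
  symm u w := G.symm u.1 w.1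

theorem evalK_update (L y : V → ℤ) (v : V) (c : ℤ) :
    evalK (Function.update L v (L v + c)) y = evalK L y + c * y v := by
  unfold evalK
  have h : ∀ u, Function.update L v (L v + c) u * y u
      = L u * y u + (if u = v then c * y u else 0) := by
    intro u
    rcases eq_or_ne u v with hu | hu <;> simp [hu, Function.update] <;> ring
  simp only [h]
  rw [Finset.sum_add_distrib, Finset.sum_ite_eq' Finset.univ v (fun u => c * y u)]
  simp

theorem IsChar.chAdd {G : WGraph V} {K : V → ℤ} (h : G.IsChar K) (x : V → ℤ) :
    G.IsChar (G.chAdd K x) := by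
  intro y
  have key : evalK (G.chAdd K x) y
      = evalK K y + 2 * ∑ u, G.pair x (eVec {u}) * y u := by
    simp only [evalK, WGraph.chAdd, add_mul, mul_assoc]
    rw [Finset.sum_add_distrib, ← Finset.mul_sum]
  have hy := h y
  simp only [Int.ModEq] at hy ⊢
  rw [key]
  omega

theorem pair_bump (G : WGraph V) (v : V) (y : V → ℤ) :
    (G.bump v).pair y y = G.pair y y + y v * y v := by
  unfold pair bump
  have hu : ∀ u w : V, ((if u = v ∧ w = v then G.M u w + 1 else G.M u w) * y u * y w)
      = G.M u w * y u * y w + (if u = v ∧ w = v then y u * y w else 0) := by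
    intro u w
    rcases eq_or_ne u v with h | h <;> rcases eq_or_ne w v with h' | h' <;>
      simp [h, h'] <;> ring
  simp only [hu, Finset.sum_add_distrib]
  congr 1
  have hin : ∀ u : V, (∑ w, if u = v ∧ w = v then y u * y w else 0)
      = if u = v then y u * y v else 0 := by
    intro u
    rcases eq_or_ne u v with h | h
    · simp [h, Finset.sum_ite_eq' Finset.univ v (fun w => y v * y w)]
    · simp [h]
  rw [Finset.sum_congr rfl (fun u _ => hin u),
    Finset.sum_ite_eq' Finset.univ v (fun u => y u * y v)]
  simp

theorem IsChar.bumpUpdate {G : WGraph V} {L : V → ℤ} (h : G.IsChar L) (v : V) (i : ℤ) :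
    (G.bump v).IsChar (Function.update L v (L v + (2 * i + 1))) := by
  intro y
  have h1 := evalK_update L y v (2 * i + 1)
  have h2 := pair_bump G v y
  have hy := h y
  obtain ⟨k, hk⟩ := Int.even_mul_succ_self (y v - 1)
  have hk' : y v * y v - y v = 2 * k := by
    have h5 : (y v - 1) * (y v - 1 + 1) = y v * y v - y v := by ring
    omega
  have h3 : (2 * i + 1) * y v = 2 * (i * y v) + y v := by ring
  simp only [Int.ModEq] at hy ⊢
  rw [h1, h2, h3]
  omega

theorem IsChar.evenUpdate {G : WGraph V} {L : V → ℤ} (h : G.IsChar L) (v : V) (k : ℤ) :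
    G.IsChar (Function.update L v (L v + 2 * k)) := by
  intro y
  have h1 := evalK_update L y v (2 * k)
  have hy := h y
  have h3 : 2 * k * y v = 2 * (k * y v) := by ring
  simp only [Int.ModEq] at hy ⊢
  rw [h1, h3]
  omega

end WGraph

/-- Extension of `K ∈ Hom(L(G−v),ℤ)` to `Hom(L(G),ℤ)` by the value `t` at `v`:
the vector denoted `(K, t)`. -/
def extV (v : V) (K : {u : V // u ≠ v} → ℤ) (t : ℤ) : V → ℤ :=
  fun u => if h : u = v then t else K ⟨u, h⟩

namespace WGraph

theorem IsChar.extChar {G : WGraph V} {v : V} {K : {u : V // u ≠ v} → ℤ}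
    (h : (G.delete v).IsChar K) {t : ℤ} (ht : t ≡ G.M v v [ZMOD 2]) :
    G.IsChar (extV v K t) := by
  intro y
  have h1 : evalK (extV v K t) y = t * y v + evalK K (fun u => y u.1) := by
    unfold evalK
    rw [sum_split v (fun u => extV v K t u * y u)]
    congr 1
    · simp [extV]
    · exact Finset.sum_congr rfl fun u _ => by simp [extV, u.2]
  have h2 : G.pair y y = (G.delete v).pair (fun u => y u.1) (fun u => y u.1)
      + G.M v v * (y v * y v)
      + 2 * ∑ u : {u : V // u ≠ v}, G.M v u.1 * y v * y u.1 := by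
    have step1 : G.pair y y = (∑ w, G.M v w * y v * y w)
        + ∑ u : {u : V // u ≠ v}, ∑ w, G.M u.1 w * y u.1 * y w :=
      sum_split v (fun u => ∑ w, G.M u w * y u * y w)
    have step2 : (∑ w, G.M v w * y v * y w)
        = G.M v v * y v * y v + ∑ w : {w : V // w ≠ v}, G.M v w.1 * y v * y w.1 :=
      sum_split v _
    have step3 : ∀ u : {u : V // u ≠ v}, (∑ w, G.M u.1 w * y u.1 * y w)
        = G.M u.1 v * y u.1 * y v + ∑ w : {w : V // w ≠ v}, G.M u.1 w.1 * y u.1 * y w.1 :=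
      fun u => sum_split v _
    have step4 : (G.delete v).pair (fun u => y u.1) (fun u => y u.1)
        = ∑ u : {u : V // u ≠ v}, ∑ w : {w : V // w ≠ v}, G.M u.1 w.1 * y u.1 * y w.1 := rfl
    have hc : (∑ u : {u : V // u ≠ v}, G.M u.1 v * y u.1 * y v)
        = ∑ u : {u : V // u ≠ v}, G.M v u.1 * y v * y u.1 := by
      refine Finset.sum_congr rfl fun u _ => ?_
      rw [G.symm u.1 v]; ring
    rw [step1, step2, Finset.sum_congr rfl (fun u _ => step3 u),
      Finset.sum_add_distrib, hc, step4]
    ring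
  have hy := h (fun u => y u.1)
  obtain ⟨k, hk⟩ := Int.even_mul_succ_self (y v - 1)
  have hk' : y v * y v - y v = 2 * k := by
    have h5 : (y v - 1) * (y v - 1 + 1) = y v * y v - y v := by ring
    omega
  obtain ⟨a, ha⟩ : (2:ℤ) ∣ t - G.M v v := Int.ModEq.dvd ht.symm
  have e1 : t * y v = G.M v v * y v + 2 * (a * y v) := by
    have h6 : t = G.M v v + 2 * a := by omega
    rw [h6]; ring
  have e2 : G.M v v * (y v * y v) = G.M v v * y v + 2 * (G.M v v * k) := by
    have h7 : y v * y v = y v + 2 * k := by omega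
    rw [h7]; ring
  simp only [Int.ModEq] at hy ⊢
  rw [h1, h2, e1, e2]
  omega

variable {G : WGraph V}

/-- `K + 2x` as a characteristic vector. -/
def Ch.add (K : G.Ch) (x : V → ℤ) : G.Ch := ⟨G.chAdd K.1 x, K.2.chAdd x⟩

/-- For `K = (K', t) ∈ Char(G)`, the characteristic vector
`(K', t + 2i + 1) ∈ Char(G₊₁(v))`. -/
def Ch.bumpSh (K : G.Ch) (v : V) (i : ℤ) : (G.bump v).Ch :=
  ⟨Function.update K.1 v (K.1 v + (2 * i + 1)), K.2.bumpUpdate v i⟩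

/-- For `K = (K', t) ∈ Char(G)`, the characteristic vector `(K', t + 2k) ∈ Char(G)`. -/
def Ch.evenSh (K : G.Ch) (v : V) (k : ℤ) : G.Ch :=
  ⟨Function.update K.1 v (K.1 v + 2 * k), K.2.evenUpdate v k⟩

/-- For `K ∈ Char(G−v)`, the characteristic vector `(K, m(v) + 2i) ∈ Char(G)`. -/
def Ch.extend {v : V} (K : (G.delete v).Ch) (i : ℤ) : G.Ch :=
  ⟨extV v K.1 (G.M v v + 2 * i),
    K.2.extChar (by show (G.M v v + 2 * i) % 2 = G.M v v % 2; omega)⟩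

end WGraph

/-- `𝒯⁺₀ = 𝔽[U,U⁻¹]/(U·𝔽[U])` over `𝔽 = ℤ/2ℤ`: the coefficient at `d ∈ ℕ` records
the coefficient of `U^{−d}`. -/
def Tplus : Type := ℕ →₀ ZMod 2

instance : AddCommGroup Tplus := inferInstanceAs (AddCommGroup (ℕ →₀ ZMod 2))
instance : Module (ZMod 2) Tplus := inferInstanceAs (Module (ZMod 2) (ℕ →₀ ZMod 2))

/-- The element `U^{-m}` of `𝒯⁺₀`. -/
def Um (m : ℕ) : Tplus := (Finsupp.single m 1 : ℕ →₀ ZMod 2)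

/-- Multiplication by `U^e` on `𝒯⁺₀`: `U^e · U^{−d} = U^{−(d−e)}` (which is `0` if `d < e`). -/
def Upow (e : ℤ) (f : Tplus) : Tplus :=
  (Finsupp.comapDomain (fun d : ℕ => (d : ℤ) + e)
    (Finsupp.embDomain ⟨(Nat.cast : ℕ → ℤ), Nat.cast_injective⟩ (f : ℕ →₀ ZMod 2))
    (fun a _ b _ hab => Nat.cast_injective (add_right_cancel hab)) : ℕ →₀ ZMod 2)

theorem Upow_zero (e : ℤ) : Upow e 0 = 0 := by
  show (Finsupp.comapDomain _ (Finsupp.embDomain _ (0 : ℕ →₀ ZMod 2)) _ : ℕ →₀ ZMod 2)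
    = (0 : ℕ →₀ ZMod 2)
  ext d
  simp

/-- `C⁺(G)`: the `𝔽[U]`-module of finitely supported maps `Char(G) × 𝒫(V) → 𝒯⁺₀`. -/
abbrev Cplus (G : WGraph V) : Type _ := (G.Ch × Finset V) →₀ Tplus

/-- The action of (multiplication by) `U` on `C⁺(G)`. -/
def UC (G : WGraph V) (φ : Cplus G) : Cplus G := Finsupp.mapRange (Upow 1) (Upow_zero 1) φ

/-- `U^{−m} · (K,S)^∨`: the element of `C⁺(G)` supported at the single pair `(K,S)`
with value `U^{−m}`. -/
def dual {G : WGraph V} (p : G.Ch × Finset V) (m : ℕ) : Cplus G :=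
  Finsupp.single p (Um m)

/-- The exponent `q(K,S) − q(K, S−w)`. -/
def dExp₁ (G : WGraph V) (K : V → ℤ) (S : Finset V) (w : V) : ℤ :=
  G.qrel K S - G.qrel K (S.erase w)

/-- The exponent `q(K,S) − q(K + 2E_w, S−w)`. -/
def dExp₂ (G : WGraph V) (K : V → ℤ) (S : Finset V) (w : V) : ℤ :=
  G.qrel K S - (G.qdiff K (eVec {w}) + G.qrel (G.chAdd K (eVec {w})) (S.erase w))

/-- `δ` is the operator on `C⁺(G)` given by
`δ(φ)(K,S) = ∑_{w∈S} [U^{q(K,S)−q(K,S−w)}·φ(K,S−w) + U^{q(K,S)−q(K+2E_w,S−w)}·φ(K+2E_w,S−w)]`. -/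
def IsDelta (G : WGraph V) (δ : Cplus G → Cplus G) : Prop :=
  ∀ (φ : Cplus G) (K : G.Ch) (S : Finset V),
    δ φ (K, S) = ∑ w ∈ S,
      (Upow (dExp₁ G K.1 S w) (φ (K, S.erase w))
        + Upow (dExp₂ G K.1 S w) (φ (K.add (eVec {w}), S.erase w)))

/-- The exponent
`c(i,(K,t),S) = [q((K,t),S) − q(K,t)] − [q'((K,t+2i+1),S) − q'(K,t+2i+1)] + i(i+1)/2`. -/
def cExp (G : WGraph V) (v : V) (i : ℤ) (K : G.Ch) (S : Finset V) : ℤ :=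
  G.qrel K.1 S - (G.bump v).qrel (K.bumpSh v i).1 S + i * (i + 1) / 2

/-- `A` is the map `C⁺(G₊₁(v)) → C⁺(G)` given by
`A(φ)((K,t),S) = ∑_{i∈ℤ} U^{c(i,(K,t),S)} · φ((K,t+2i+1),S)`. -/
def IsA (G : WGraph V) (v : V) (A : Cplus (G.bump v) → Cplus G) : Prop :=
  ∀ (φ : Cplus (G.bump v)) (K : G.Ch) (S : Finset V),
    A φ (K, S) = ∑ᶠ i : ℤ, Upow (cExp G v i K S) (φ (K.bumpSh v i, S))

/-- A subset `S ⊆ V − v` viewed as a subset of `V`. -/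
def liftS (v : V) (S : Finset {u : V // u ≠ v}) : Finset V :=
  S.map ⟨Subtype.val, Subtype.val_injective⟩

/-- `B` is the map `C⁺(G) → C⁺(G−v)` given by
`B(φ)(K,S) = ∑_{i∈ℤ} φ((K, m(v)+2i), S)`. -/
def IsB (G : WGraph V) (v : V) (B : Cplus G → Cplus (G.delete v)) : Prop :=
  ∀ (φ : Cplus G) (K : (G.delete v).Ch) (S : Finset {u : V // u ≠ v}),
    B φ (K, S) = ∑ᶠ i : ℤ, φ (K.extend i, liftS v S)

/-- `r((K,t),S) = q((K,t),S−v) − q((K,t)+2E_v,S−v)` (for `v ∈ S`). -/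
def rVal (G : WGraph V) (v : V) (K : G.Ch) (S : Finset V) : ℤ :=
  G.qrel K.1 (S.erase v)
    - (G.qdiff K.1 (eVec {v}) + G.qrel (G.chAdd K.1 (eVec {v})) (S.erase v))

/-- The lattice cohomology `ℍ⁺`: the homology of the complex `(C⁺, δ)`. -/
abbrev Hlat {G : WGraph V} (δ : Cplus G →ₗ[ZMod 2] Cplus G) : Type _ :=
  LinearMap.ker δ ⧸ (LinearMap.range δ).comap (LinearMap.ker δ).subtype

/-- `𝒟₁ ⊆ C⁺(G)`: the `𝔽`-submodule generated by the `U^{−m}·((K,t),S)^∨` with `v ∈ S`. -/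
def D1 (G : WGraph V) (v : V) : Submodule (ZMod 2) (Cplus G) :=
  Submodule.span (ZMod 2)
    {χ | ∃ (K : G.Ch) (S : Finset V) (m : ℕ), v ∈ S ∧ χ = dual (K, S) m}

/-- `𝒟₂ ⊆ C⁺(G)`: the `𝔽`-submodule generated by the
`U^{−m}·[((K,t),S)^∨ + ((K,t+2),S)^∨]` with `v ∉ S`. -/
def D2 (G : WGraph V) (v : V) : Submodule (ZMod 2) (Cplus G) :=
  Submodule.span (ZMod 2)
    {χ | ∃ (K : G.Ch) (S : Finset V) (m : ℕ), v ∉ S ∧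
      χ = dual (K, S) m + dual (K.evenSh v 1, S) m}

end

/-!
Both `δ(Aφ)` and `A(δ'φ)` at `((K, t), S)` are double sums over `w ∈ S` and `i ∈ ℤ` of
`U`-multiples of values of `φ`, and they agree term by term. Write `K_i = (K, t + 2i + 1)`.
For the terms `φ(K_i, S − w)` the exponents agree because the `q`-differences telescope.
For the terms `φ(K_i + 2E_w, S − w)` one has `K_i + 2E_w = (K + 2E_w)_i` if `w ≠ v`, while
`K_i + 2E_v = (K + 2E_v)_{i+1}` because `(E_v, E_v)` grows by one in `G₊₁(v)`. After the
reindexing `i ↦ i + 1` the exponents agree by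
`q'(K_i + 2E_T) − q'(K_i) = q(K + 2E_T) − q(K) − (i + 1)[v ∈ T]` and
`(i + 1)(i + 2)/2 = i(i + 1)/2 + (i + 1)`.
Throughout, `U^a U^b = U^{a+b}` on `𝒯⁺₀` needs `a ≥ 0` (`U^{-1} (U · 1) = 0`); all exponents
that occur are nonnegative, `c` because `0` and `−(i + 1)` are both at most `i(i + 1)/2`.
-/

open Function

namespace Tplus

def coeff (f : Tplus) (d : ℕ) : ZMod 2 := DFunLike.coe (F := ℕ →₀ ZMod 2) f d

theorem ext {f g : Tplus} (h : ∀ d, f.coeff d = g.coeff d) : f = g :=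
  Finsupp.ext (M := ZMod 2) h

theorem coeff_add (f g : Tplus) (d : ℕ) : (f + g).coeff d = f.coeff d + g.coeff d := rfl

end Tplus

theorem coeff_Upow (e : ℤ) (f : Tplus) (d : ℕ) :
    (Upow e f).coeff d = if 0 ≤ (d : ℤ) + e then f.coeff ((d : ℤ) + e).toNat else 0 := by
  show Finsupp.embDomain ⟨(Nat.cast : ℕ → ℤ), Nat.cast_injective⟩ (f : ℕ →₀ ZMod 2)
    ((d : ℤ) + e) = _
  split_ifs with h
  · conv_lhs => rw [← Int.toNat_of_nonneg h]
    exact Finsupp.embDomain_apply_self _ _ _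
  · refine Finsupp.embDomain_of_notMem_range _ _ _ ?_
    rintro ⟨n, hn⟩
    simp only [Function.Embedding.coeFn_mk] at hn
    omega

theorem Upow_add (e : ℤ) (f g : Tplus) : Upow e (f + g) = Upow e f + Upow e g :=
  Tplus.ext fun d => by
    simp only [Tplus.coeff_add, coeff_Upow]
    split_ifs <;> simp

noncomputable def UpowHom (e : ℤ) : Tplus →+ Tplus where
  toFun := Upow e
  map_zero' := Upow_zero e
  map_add' := Upow_add e

theorem Upow_Upow_of_nonneg {a : ℤ} (ha : 0 ≤ a) (b : ℤ) (f : Tplus) :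
    Upow a (Upow b f) = Upow (a + b) f :=
  Tplus.ext fun d => by
    simp only [coeff_Upow]
    rw [if_pos (by omega : (0 : ℤ) ≤ d + a)]
    split_ifs <;> first | rfl | omega | (congr 1; omega)

theorem Upow_finsum {ι : Type*} (e : ℤ) {f : ι → Tplus} (hf : HasFiniteSupport f) :
    Upow e (∑ᶠ i, f i) = ∑ᶠ i, Upow e (f i) :=
  (UpowHom e).map_finsum hf

theorem Upow_sum {ι : Type*} (e : ℤ) (s : Finset ι) (f : ι → Tplus) :
    Upow e (∑ i ∈ s, f i) = ∑ i ∈ s, Upow e (f i) :=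
  map_sum (UpowHom e) f s

theorem Function.HasFiniteSupport.Upow {ι : Type*} {f : ι → Tplus} (hf : HasFiniteSupport f)
    (e : ι → ℤ) : HasFiniteSupport fun i => _root_.Upow (e i) (f i) :=
  hf.subset fun i hi h0 => hi (by simp only [h0, Upow_zero])

theorem Finsupp.hasFiniteSupport_Upow_comp {ι α β : Type*} (φ : α × β →₀ Tplus) {F : ι → α}
    (hF : Injective F) (S : β) (e : ι → ℤ) :
    HasFiniteSupport fun i => Upow (e i) (φ (F i, S)) :=
  (φ.hasFiniteSupport.comp_of_injective fun _ _ h => hF (congrArg Prod.fst h)).Upow e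

variable {V : Type*} [Fintype V]

theorem evalK_add (K x y : V → ℤ) : evalK K (x + y) = evalK K x + evalK K y := by
  simp only [evalK, Pi.add_apply, mul_add, Finset.sum_add_distrib]

namespace WGraph

variable (G : WGraph V)

theorem pair_comm (x y : V → ℤ) : G.pair x y = G.pair y x := by
  unfold pair
  rw [Finset.sum_comm]
  exact Finset.sum_congr rfl fun u _ => Finset.sum_congr rfl fun w _ => by rw [G.symm]; ring

theorem pair_add_right (x y z : V → ℤ) : G.pair x (y + z) = G.pair x y + G.pair x z := by
  simp only [pair, Pi.add_apply, mul_add, Finset.sum_add_distrib]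

theorem pair_add_left (x y z : V → ℤ) : G.pair (x + y) z = G.pair x z + G.pair y z := by
  rw [pair_comm, pair_add_right, pair_comm G z, pair_comm G z]

variable {G} in
theorem IsChar.two_dvd {K : V → ℤ} (hK : G.IsChar K) (x : V → ℤ) :
    2 ∣ evalK K x + G.pair x x :=
  Int.dvd_of_emod_eq_zero (by have := hK x; simp only [Int.ModEq] at this; omega)

end WGraph

variable [DecidableEq V]

namespace WGraph

variable (G : WGraph V)

theorem pair_eVec_singleton_right (x : V → ℤ) (u : V) :
    G.pair x (eVec {u}) = ∑ a, G.M a u * x a := by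
  unfold pair eVec
  refine Finset.sum_congr rfl fun a _ => ?_
  simp only [Finset.mem_singleton, mul_ite, mul_one, mul_zero, Fintype.sum_ite_eq']

theorem pair_eVec_singleton (w u : V) : G.pair (eVec {w}) (eVec {u}) = G.M w u := by
  simp only [pair_eVec_singleton_right, eVec, Finset.mem_singleton, mul_ite, mul_one, mul_zero,
    Fintype.sum_ite_eq']

theorem evalK_chAdd (K x y : V → ℤ) : evalK (G.chAdd K x) y = evalK K y + 2 * G.pair x y := by
  simp only [evalK, chAdd, add_mul, Finset.sum_add_distrib, pair_eVec_singleton_right,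
    Finset.mul_sum, Finset.sum_mul]
  rw [Finset.sum_comm]
  simp only [pair, Finset.mul_sum]
  exact congrArg _ (Finset.sum_congr rfl fun _ _ => Finset.sum_congr rfl fun _ _ => by ring)

theorem qdiff_le_qrel (K : V → ℤ) {T S : Finset V} (h : T ⊆ S) :
    G.qdiff K (eVec T) ≤ G.qrel K S :=
  Finset.le_sup' (fun T => G.qdiff K (eVec T)) (Finset.mem_powerset.2 h)

theorem qrel_mono (K : V → ℤ) {S' S : Finset V} (h : S' ⊆ S) : G.qrel K S' ≤ G.qrel K S :=
  Finset.sup'_le _ _ fun _ hT => G.qdiff_le_qrel K ((Finset.mem_powerset.1 hT).trans h)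

variable {G}

theorem IsChar.qdiff_add {K : V → ℤ} (hK : G.IsChar K) (x y : V → ℤ) :
    G.qdiff K (x + y) = G.qdiff K x + G.qdiff (G.chAdd K x) y := by
  have hx := hK.two_dvd x
  have hy := (hK.chAdd x).two_dvd y
  have hsplit : evalK K (x + y) + G.pair (x + y) (x + y)
      = (evalK K x + G.pair x x) + (evalK (G.chAdd K x) y + G.pair y y) := by
    rw [evalK_add, pair_add_left, pair_add_right, pair_add_right, evalK_chAdd, G.pair_comm y x]
    ring
  unfold qdiff
  omega

/-- `q(K + 2E_w, S − w) ≤ q(K, S)` for `w ∈ S`. -/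
theorem IsChar.qdiff_add_qrel_chAdd_le {K : V → ℤ} (hK : G.IsChar K) {S : Finset V} {w : V}
    (hw : w ∈ S) :
    G.qdiff K (eVec {w}) + G.qrel (G.chAdd K (eVec {w})) (S.erase w) ≤ G.qrel K S := by
  suffices ∀ T ∈ (S.erase w).powerset,
      G.qdiff (G.chAdd K (eVec {w})) (eVec T) ≤ G.qrel K S - G.qdiff K (eVec {w}) by
    have := Finset.sup'_le (Finset.powerset_nonempty _) _ this
    unfold qrel at this ⊢
    omega
  intro T hT
  rw [Finset.mem_powerset, Finset.subset_erase] at hT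
  have hinsert : eVec {w} + eVec T = eVec (insert w T) := by
    funext u
    by_cases hu : u = w
    · simp [eVec, hu, hT.2]
    · simp [eVec, hu]
  have := hK.qdiff_add (eVec {w}) (eVec T)
  rw [hinsert] at this
  have := G.qdiff_le_qrel K (Finset.insert_subset hw hT.1)
  omega

end WGraph

theorem dExp₁_nonneg (G : WGraph V) (K : V → ℤ) (S : Finset V) (w : V) : 0 ≤ dExp₁ G K S w :=
  sub_nonneg.2 (G.qrel_mono K (S.erase_subset w))

theorem dExp₂_nonneg {G : WGraph V} {K : V → ℤ} (hK : G.IsChar K) {S : Finset V} {w : V}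
    (hw : w ∈ S) : 0 ≤ dExp₂ G K S w :=
  sub_nonneg.2 (hK.qdiff_add_qrel_chAdd_le hw)

namespace WGraph

theorem qdiff_bump_update (G : WGraph V) {K : V → ℤ} (hK : G.IsChar K) (v : V) (i : ℤ)
    (T : Finset V) :
    (G.bump v).qdiff (update K v (K v + (2 * i + 1))) (eVec T)
      = G.qdiff K (eVec T) - if v ∈ T then i + 1 else 0 := by
  have := hK.two_dvd (eVec T)
  unfold qdiff
  rw [evalK_update, pair_bump]
  by_cases hv : v ∈ T <;> simp only [eVec, hv, if_true, if_false] <;> omega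

theorem qrel_bump_update_le (G : WGraph V) {K : V → ℤ} (hK : G.IsChar K) (v : V) (i : ℤ)
    (S : Finset V) :
    (G.bump v).qrel (update K v (K v + (2 * i + 1))) S ≤ G.qrel K S + i * (i + 1) / 2 := by
  have htri : 0 ≤ i * (i + 1) / 2 ∧ -(i + 1) ≤ i * (i + 1) / 2 := by
    obtain ⟨k, hk⟩ := Int.even_mul_succ_self i
    have : 0 ≤ i * (i + 1) := by rcases le_or_gt 0 i with h | h <;> nlinarith
    have : 0 ≤ i * (i + 1) + 2 * (i + 1) := by rcases le_or_gt (-1) i with h | h <;> nlinarith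
    omega
  refine Finset.sup'_le _ _ fun T hT => ?_
  rw [qdiff_bump_update G hK]
  have := G.qdiff_le_qrel K (Finset.mem_powerset.1 hT)
  split_ifs <;> omega

variable {G : WGraph V}

theorem Ch.bumpSh_add_singleton (K : G.Ch) (v w : V) (i : ℤ) :
    (K.bumpSh v i).add (eVec {w}) = (K.add (eVec {w})).bumpSh v (i + if w = v then 1 else 0) := by
  refine Subtype.ext (funext fun u => ?_)
  simp only [Ch.bumpSh, Ch.add, chAdd, pair_eVec_singleton, bump]
  by_cases hu : u = v <;> by_cases hw : w = v <;> simp [hu, hw, chAdd, pair_eVec_singleton] <;> ring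

theorem Ch.bumpSh_injective (K : G.Ch) (v : V) : Injective (K.bumpSh v) := fun i j h => by
  have := congrArg (fun L : (G.bump v).Ch => L.1 v) h
  simp only [bumpSh, update_self] at this
  omega

theorem Ch.add_injective (x : V → ℤ) : Injective fun K : G.Ch => K.add x := fun K L h =>
  Subtype.ext (funext fun u => by
    have := congrFun (congrArg Subtype.val h) u
    simp only [add, chAdd] at this
    omega)

end WGraph

theorem cExp_nonneg (G : WGraph V) (v : V) (i : ℤ) (K : G.Ch) (S : Finset V) :
    0 ≤ cExp G v i K S := by
  have : (G.bump v).qrel (K.bumpSh v i).1 S ≤ G.qrel K.1 S + i * (i + 1) / 2 :=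
    G.qrel_bump_update_le K.2 v i S
  unfold cExp
  omega

theorem dExp₁_add_cExp (G : WGraph V) (v : V) (K : G.Ch) (S : Finset V) (w : V) (i : ℤ) :
    dExp₁ G K.1 S w + cExp G v i K (S.erase w)
      = cExp G v i K S + dExp₁ (G.bump v) (K.bumpSh v i).1 S w := by
  unfold dExp₁ cExp
  omega

theorem dExp₂_add_cExp (G : WGraph V) (v : V) (K : G.Ch) (S : Finset V) (w : V) (i : ℤ) :
    dExp₂ G K.1 S w + cExp G v (i + if w = v then 1 else 0) (K.add (eVec {w})) (S.erase w)
      = cExp G v i K S + dExp₂ (G.bump v) (K.bumpSh v i).1 S w := by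
  have hK : ((K.add (eVec {w})).bumpSh v (i + if w = v then 1 else 0)).1
      = (G.bump v).chAdd (K.bumpSh v i).1 (eVec {w}) :=
    congrArg Subtype.val (K.bumpSh_add_singleton v w i).symm
  have hq : (G.bump v).qdiff (K.bumpSh v i).1 (eVec {w})
      = G.qdiff K.1 (eVec {w}) - if v ∈ ({w} : Finset V) then i + 1 else 0 :=
    G.qdiff_bump_update K.2 v i {w}
  have hadd : (K.add (eVec {w})).1 = G.chAdd K.1 (eVec {w}) := rfl
  have htri : (i + 1) * (i + 1 + 1) / 2 = i * (i + 1) / 2 + (i + 1) := by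
    obtain ⟨k, hk⟩ := Int.even_mul_succ_self i
    rw [show (i + 1) * (i + 1 + 1) = i * (i + 1) + 2 * (i + 1) by ring, hk]
    omega
  unfold dExp₂ cExp
  rw [hK, hq, hadd]
  by_cases hw : w = v
  · simp only [hw, Finset.mem_singleton, if_true, htri]
    omega
  · simp only [hw, Finset.mem_singleton, Ne.symm hw, if_false, add_zero]
    omega

namespace IsA

variable {G : WGraph V} {v : V} {A : Cplus (G.bump v) → Cplus G}

theorem map_add (hA : IsA G v A) (φ ψ : Cplus (G.bump v)) : A (φ + ψ) = A φ + A ψ :=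
  Finsupp.ext fun ⟨K, S⟩ => by
    rw [Finsupp.add_apply, hA, hA, hA,
      ← finsum_add_distrib (φ.hasFiniteSupport_Upow_comp (K.bumpSh_injective v) S _)
        (ψ.hasFiniteSupport_Upow_comp (K.bumpSh_injective v) S _)]
    exact finsum_congr fun i => by rw [Finsupp.add_apply, Upow_add]

theorem isLinearMap (hA : IsA G v A) : IsLinearMap (ZMod 2) A :=
  ⟨hA.map_add, ZMod.map_smul (AddMonoidHom.mk' A hA.map_add)⟩

theorem map_UC (hA : IsA G v A) (φ : Cplus (G.bump v)) : A (UC (G.bump v) φ) = UC G (A φ) :=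
  Finsupp.ext fun ⟨K, S⟩ => by
    simp only [UC, Finsupp.mapRange_apply]
    rw [hA, hA, Upow_finsum 1 (φ.hasFiniteSupport_Upow_comp (K.bumpSh_injective v) S _)]
    refine finsum_congr fun i => ?_
    rw [Finsupp.mapRange_apply, Upow_Upow_of_nonneg (cExp_nonneg G v i K S),
      Upow_Upow_of_nonneg zero_le_one, add_comm]

theorem delta_apply (hA : IsA G v A) {δ : Cplus G → Cplus G} (hδ : IsDelta G δ)
    (φ : Cplus (G.bump v)) (K : G.Ch) (S : Finset V) :
    δ (A φ) (K, S) = ∑ w ∈ S,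
      (∑ᶠ i, Upow (dExp₁ G K.1 S w + cExp G v i K (S.erase w)) (φ (K.bumpSh v i, S.erase w))
        + ∑ᶠ i, Upow (dExp₂ G K.1 S w + cExp G v i (K.add (eVec {w})) (S.erase w))
          (φ ((K.add (eVec {w})).bumpSh v i, S.erase w))) := by
  rw [hδ]
  refine Finset.sum_congr rfl fun w hw => ?_
  rw [hA, hA, Upow_finsum _ (φ.hasFiniteSupport_Upow_comp (K.bumpSh_injective v) _ _),
    Upow_finsum _ (φ.hasFiniteSupport_Upow_comp ((K.add _).bumpSh_injective v) _ _)]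
  congr 1 <;> refine finsum_congr fun i => Upow_Upow_of_nonneg ?_ _ _
  exacts [dExp₁_nonneg G K.1 S w, dExp₂_nonneg K.2 hw]

theorem apply_delta (hA : IsA G v A) {δ' : Cplus (G.bump v) → Cplus (G.bump v)}
    (hδ' : IsDelta (G.bump v) δ') (φ : Cplus (G.bump v)) (K : G.Ch) (S : Finset V) :
    A (δ' φ) (K, S) = ∑ w ∈ S,
      (∑ᶠ i, Upow (cExp G v i K S + dExp₁ (G.bump v) (K.bumpSh v i).1 S w)
          (φ (K.bumpSh v i, S.erase w))
        + ∑ᶠ i, Upow (cExp G v i K S + dExp₂ (G.bump v) (K.bumpSh v i).1 S w)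
          (φ ((K.bumpSh v i).add (eVec {w}), S.erase w))) := by
  have hfin₁ (w : V) := φ.hasFiniteSupport_Upow_comp (K.bumpSh_injective v) (S.erase w)
  have hfin₂ (w : V) := φ.hasFiniteSupport_Upow_comp
    ((WGraph.Ch.add_injective (eVec {w})).comp (K.bumpSh_injective v)) (S.erase w)
  have hterm (i : ℤ) : Upow (cExp G v i K S) (δ' φ (K.bumpSh v i, S)) = ∑ w ∈ S,
      (Upow (cExp G v i K S + dExp₁ (G.bump v) (K.bumpSh v i).1 S w)
          (φ (K.bumpSh v i, S.erase w))
        + Upow (cExp G v i K S + dExp₂ (G.bump v) (K.bumpSh v i).1 S w)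
          (φ ((K.bumpSh v i).add (eVec {w}), S.erase w))) := by
    rw [hδ', Upow_sum]
    refine Finset.sum_congr rfl fun w _ => ?_
    rw [Upow_add, Upow_Upow_of_nonneg (cExp_nonneg G v i K S),
      Upow_Upow_of_nonneg (cExp_nonneg G v i K S)]
  rw [hA, finsum_congr hterm, finsum_sum_comm]
  · exact Finset.sum_congr rfl fun w _ => finsum_add_distrib (hfin₁ w _) (hfin₂ w _)
  · exact fun w _ => (hfin₁ w _).add (hfin₂ w _)

theorem comp_delta (hA : IsA G v A) {δ : Cplus G → Cplus G} (hδ : IsDelta G δ)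
    {δ' : Cplus (G.bump v) → Cplus (G.bump v)} (hδ' : IsDelta (G.bump v) δ')
    (φ : Cplus (G.bump v)) : δ (A φ) = A (δ' φ) :=
  Finsupp.ext fun ⟨K, S⟩ => by
    rw [hA.delta_apply hδ, hA.apply_delta hδ']
    refine Finset.sum_congr rfl fun w _ => ?_
    congr 1
    · exact finsum_congr fun i => by rw [dExp₁_add_cExp]
    · rw [← finsum_comp_equiv (Equiv.addRight (if w = v then 1 else 0))]
      exact finsum_congr fun i => by
        rw [Equiv.coe_addRight, dExp₂_add_cExp, K.bumpSh_add_singleton]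

end IsA

/-- The map `A : C⁺(G₊₁(v)) → C⁺(G)` defined by
`A(φ)((K,t),S) = ∑_{i∈ℤ} U^{c(i,(K,t),S)}·φ((K,t+2i+1),S)` is an `𝔽[U]`-equivariant chain
map, i.e. `δ∘A = A∘δ` and `A` commutes with multiplication by `U`. -/
theorem A_equivariant_chain_map (G : WGraph V) (v : V)
    (δG : Cplus G → Cplus G) (hδG : IsDelta G δG)
    (δG' : Cplus (G.bump v) → Cplus (G.bump v)) (hδG' : IsDelta (G.bump v) δG')
    (A : Cplus (G.bump v) → Cplus G) (hA : IsA G v A) :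
    IsLinearMap (ZMod 2) A ∧ (∀ φ, A (UC (G.bump v) φ) = UC G (A φ)) ∧
      (∀ φ, δG (A φ) = A (δG' φ)) :=
  ⟨hA.isLinearMap, hA.map_UC, hA.comp_delta hδG hδG'⟩
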